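/- Let T be an increasing shifted tableau with first-row maximum T_{(1,λ₁)} < a, and suppose a < b < c with row(T)·bac an FPF-involution word. Then both insertions T ← bac and T ← bca append a and c to the end of the first row of T (giving first row ending ⋯, a, c) and then insert b into the second row, yielding equal tableaux T ← bac = T ← bca. -/

import Mathlib

/-- The function underlying the permutation `Θ = (12)(34)(56)⋯` on positive integers
(fixing `0`). -/
def thetaFun (n : ℕ) : ℕ :=
  if n = 0 then 0 else if n % 2 = 1 then n + 1 else n - 1

lemma thetaFun_involutive : Function.Involutive thetaFun := by
  intro n
  by_cases h0 : n = 0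
  · simp [thetaFun, h0]
  · by_cases h1 : n % 2 = 1
    · have e1 : thetaFun n = n + 1 := by simp [thetaFun, h0, h1]
      have h2 : ¬ ((n + 1) % 2 = 1) := by omega
      have h3 : ¬ (n + 1 = 0) := by omega
      rw [e1]
      simp only [thetaFun, if_neg h3, if_neg h2]
      omega
    · have e1 : thetaFun n = n - 1 := by simp [thetaFun, h0, h1]
      have h2 : (n - 1) % 2 = 1 := by omega
      have h3 : ¬ (n - 1 = 0) := by omega
      rw [e1]
      simp only [thetaFun, if_neg h3, if_pos h2]
      omega

/-- The fixed-point-free involution `Θ = (12)(34)(56)⋯`. -/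
def theta : Equiv.Perm ℕ := Function.Involutive.toPerm thetaFun thetaFun_involutive

/-- The simple transposition `s_i = (i, i+1)`. -/
def sPerm (i : ℕ) : Equiv.Perm ℕ := Equiv.swap i (i + 1)

/-- For a word `w = i₁i₂⋯i_l`, the permutation `s_{i_l}⋯s_{i₁} Θ s_{i₁}⋯s_{i_l}`. -/
def heckeConj (w : List ℕ) : Equiv.Perm ℕ :=
  ((w.map sPerm).reverse).prod * theta * (w.map sPerm).prod

/-- `w` is a symplectic Hecke word for `z`, i.e. a word of positive letters with
`z = s_{i_l}⋯s_{i₁} Θ s_{i₁}⋯s_{i_l}`. -/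
def SympHecke (z : Equiv.Perm ℕ) (w : List ℕ) : Prop :=
  (∀ i ∈ w, 1 ≤ i) ∧ z = heckeConj w

/-- `z` belongs to `F_∞`, the conjugacy set `{π⁻¹ Θ π : π ∈ S_∞}`. -/
def InFinf (z : Equiv.Perm ℕ) : Prop := ∃ w : List ℕ, SympHecke z w

/-- `w` is an FPF-involution word for `z`: a symplectic Hecke word for `z` of minimal
length among all symplectic Hecke words for `z`. -/
def IsFPFWordFor (z : Equiv.Perm ℕ) (w : List ℕ) : Prop :=
  SympHecke z w ∧ ∀ w' : List ℕ, SympHecke z w' → w.length ≤ w'.length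

/-- `w` is an FPF-involution word (for the element it determines). -/
def IsFPFWord (w : List ℕ) : Prop := IsFPFWordFor (heckeConj w) w
/-- A shifted tableau, given as its list of rows (top to bottom); row `i` (0-indexed)
implicitly occupies absolute columns `i, i+1, …`. -/
abbrev Tab := List (List ℕ)

/-- Replace row `i` of `T` by `r`, creating a new row if `i = T.length`. -/
def updRow (T : Tab) (i : ℕ) (r : List ℕ) : Tab :=
  if i < T.length then T.set i r else T ++ [r]

/-- The entries of absolute column `c` of `T`, from top to bottom. -/
def colList (T : Tab) (c : ℕ) : List ℕ :=
  (List.range (c + 1)).filterMap (fun i => (T[i]?).bind (fun r => r[c - i]?))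

mutual
/-- `InsRow T i a T' pos pr`: the row-insertion phase of FPF-involution Coxeter-Knuth
insertion, inserting the letter `a` into row `i` of `T`, eventually producing the
tableau `T'` with new box at position `pos` (row, absolute column), `pr = true` iff the
insertion terminated with a column insertion. -/
inductive InsRow : Tab → ℕ → ℕ → Tab → ℕ × ℕ → Bool → Prop
  | append (T : Tab) (i a : ℕ) (r : List ℕ) :
      r = T.getD i [] →
      r.dropWhile (fun x => decide (x < a)) = [] →
      InsRow T i a (updRow T i (r ++ [a])) (i, i + r.length) false
  | equal (T : Tab) (i a : ℕ) (rest : List ℕ) (T' : Tab) (pos : ℕ × ℕ) (pr : Bool) :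
      (T.getD i []).dropWhile (fun x => decide (x < a)) = a :: rest →
      InsRow T (i+1) (a+1) T' pos pr →
      InsRow T i a T' pos pr
  | parity (T : Tab) (i a b : ℕ) (rest : List ℕ) (T' : Tab) (pos : ℕ × ℕ) (pr : Bool) :
      (T.getD i []).takeWhile (fun x => decide (x < a)) = [] →
      (T.getD i []).dropWhile (fun x => decide (x < a)) = b :: rest →
      a < b → a % 2 ≠ b % 2 →
      InsCol T (i+1) (a+2) T' pos pr →
      InsRow T i a T' pos pr
  | bumpRow (T : Tab) (i a b : ℕ) (pre rest : List ℕ) (T' : Tab) (pos : ℕ × ℕ) (pr : Bool) :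
      pre = (T.getD i []).takeWhile (fun x => decide (x < a)) →
      (T.getD i []).dropWhile (fun x => decide (x < a)) = b :: rest →
      a < b → pre ≠ [] →
      InsRow (T.set i (pre ++ a :: rest)) (i+1) b T' pos pr →
      InsRow T i a T' pos pr
  | bumpDiag (T : Tab) (i a b : ℕ) (rest : List ℕ) (T' : Tab) (pos : ℕ × ℕ) (pr : Bool) :
      (T.getD i []).takeWhile (fun x => decide (x < a)) = [] →
      (T.getD i []).dropWhile (fun x => decide (x < a)) = b :: rest →
      a < b → a % 2 = b % 2 →
      InsCol (T.set i (a :: rest)) (i+1) b T' pos pr →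
      InsRow T i a T' pos pr

/-- `InsCol T c x T' pos pr`: the column-insertion phase, inserting `x` into the
absolute column `c` of `T`. -/
inductive InsCol : Tab → ℕ → ℕ → Tab → ℕ × ℕ → Bool → Prop
  | append (T : Tab) (c x k : ℕ) :
      (colList T c).dropWhile (fun y => decide (y < x)) = [] →
      k = (colList T c).length →
      (T.getD k []).length = c - k →
      k ≤ c →
      InsCol T c x (updRow T k ((T.getD k []) ++ [x])) (k, c) true
  | equal (T : Tab) (c x : ℕ) (rest : List ℕ) (T' : Tab) (pos : ℕ × ℕ) (pr : Bool) :
      (colList T c).dropWhile (fun y => decide (y < x)) = x :: rest →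
      InsCol T (c+1) (x+1) T' pos pr →
      InsCol T c x T' pos pr
  | bump (T : Tab) (c x b k : ℕ) (rest : List ℕ) (T' : Tab) (pos : ℕ × ℕ) (pr : Bool) :
      (colList T c).dropWhile (fun y => decide (y < x)) = b :: rest →
      x < b →
      k = ((colList T c).takeWhile (fun y => decide (y < x))).length →
      InsCol (T.set k ((T.getD k []).set (c - k) x)) (c+1) b T' pos pr →
      InsCol T c x T' pos pr
end

/-- Insertion of a word, letter by letter, each letter starting at the first row.
`InsWord T w T'` means `T ← w = T'`. -/
inductive InsWord : Tab → List ℕ → Tab → Prop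
  | nil (T : Tab) : InsWord T [] T
  | cons (T T₁ T₂ : Tab) (a : ℕ) (w : List ℕ) (pos : ℕ × ℕ) (pr : Bool) :
      InsRow T 0 a T₁ pos pr → InsWord T₁ w T₂ → InsWord T (a :: w) T₂

/-- A recording tableau: each box carries a label together with a primed flag. -/
abbrev RTab := List (List (ℕ × Bool))

/-- Replace row `i` of a recording tableau, creating a new row if needed. -/
def updRowR (Q : RTab) (i : ℕ) (r : List (ℕ × Bool)) : RTab :=
  if i < Q.length then Q.set i r else Q ++ [r]

/-- `InsWordRec T Q k w T' Q'`: insertion of the word `w` starting from the pair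
`(T, Q)` with next label `k`, recording label `k` (primed iff the insertion of the
letter terminated with a column insertion) in the new box. -/
inductive InsWordRec : Tab → RTab → ℕ → List ℕ → Tab → RTab → Prop
  | nil (T : Tab) (Q : RTab) (k : ℕ) : InsWordRec T Q k [] T Q
  | cons (T T₁ T₂ : Tab) (Q Q₂ : RTab) (k a i j : ℕ) (w : List ℕ) (pr : Bool) :
      InsRow T 0 a T₁ (i, j) pr →
      InsWordRec T₁ (updRowR Q i ((Q.getD i []) ++ [(k, pr)])) (k+1) w T₂ Q₂ →
      InsWordRec T Q k (a :: w) T₂ Q₂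

/-- `T` is an increasing shifted tableau (with positive entries). -/
def IsIncreasingTab (T : Tab) : Prop :=
  (∀ r ∈ T, r ≠ []) ∧
  List.Chain' (fun r s : List ℕ => s.length < r.length) T ∧
  (∀ r ∈ T, List.Chain' (· < ·) r) ∧
  (∀ r ∈ T, ∀ x ∈ r, 1 ≤ x) ∧
  (∀ i k x y, (T.getD (i+1) [])[k]? = some x →
      (T.getD i [])[k+1]? = some y → y < x)

/-- The row reading word of `T`: rows from bottom to top, each left to right. -/
def rowWord (T : Tab) : List ℕ := T.reverse.flatten

/-!
Every entry of the first row is smaller than `a < b < c`, so `b` is appended to the first row.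
In `bac`, `a` then bumps `b` into the second row and `c` is appended behind `a`; in `bca`, `c` is
appended behind `b` first and `a` then bumps `b`, leaving `c` where it is. Either way `b` is
inserted into the second row of the same tableau, whose first row ends in `a` in one case and in
`a, c` in the other. So it suffices that this insertion exists, leaves the first row alone and
never looks past its last box `a`.

It does, because every row below the first ends strictly before the column of `a`, and every
letter carried along by the insertion exceeds all entries of the first row: no bump lands in the
first row, and a column insertion reaches an outer corner before it could pass the column of `a`.
-/

open List

theorem List.getElem?_filterMap_range_of_antitone {α : Type*} {f : ℕ → Option α}
    (hf : ∀ i j, i ≤ j → (f j).isSome → (f i).isSome) (n j : ℕ) :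
    ((range n).filterMap f)[j]? = if j < n then f j else none := by
  induction n generalizing j with
  | zero => simp
  | succ n ih =>
    rw [range_succ, filterMap_append]
    cases hn : f n with
    | none =>
      have hj : j = n → f j = none := by rintro rfl; exact hn
      simp only [filterMap_cons, hn, filterMap_nil, append_nil, ih]
      split_ifs <;> first | rfl | omega | exact (hj (by omega)).symm
    | some y =>
      have hlen : ((range n).filterMap f).length = n := by
        rw [filterMap_length_eq_length.2 fun i hi => hf i n (by simp at hi; omega)
          (by simp [hn]), length_range]
      simp only [filterMap_cons, hn, filterMap_nil]
      rcases lt_trichotomy j n with hjn | rfl | hjn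
      · rw [getElem?_append_left (by omega), ih, if_pos hjn, if_pos (by omega)]
      · rw [getElem?_append_right (by omega)]; simp [hlen, hn]
      · rw [getElem?_eq_none (by simp; omega), if_neg (by omega)]

theorem List.eq_takeWhile_append_of_dropWhile_eq_cons {p : ℕ → Bool} {l rest : List ℕ}
    {b : ℕ} (h : l.dropWhile p = b :: rest) : l = l.takeWhile p ++ b :: rest := by
  rw [← h, takeWhile_append_dropWhile]

theorem List.getElem?_length_takeWhile {p : ℕ → Bool} {l rest : List ℕ} {b : ℕ}
    (h : l.dropWhile p = b :: rest) : l[(l.takeWhile p).length]? = some b := by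
  have hs := eq_takeWhile_append_of_dropWhile_eq_cons h
  set pre := l.takeWhile p
  rw [hs, getElem?_append_right le_rfl, Nat.sub_self]
  rfl

theorem List.not_of_dropWhile_eq_cons {p : ℕ → Bool} {l rest : List ℕ} {b : ℕ}
    (h : l.dropWhile p = b :: rest) : p b = false := by
  simpa [h] using head_dropWhile_not p (l := l) (by simp [h])

theorem List.le_of_dropWhile_lt_eq_cons {l rest : List ℕ} {x b : ℕ}
    (h : l.dropWhile (· < x) = b :: rest) : x ≤ b := by
  simpa using not_of_dropWhile_eq_cons h

theorem List.exists_getElem?_lt_of_lt_length_takeWhile {l : List ℕ} {x j : ℕ}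
    (hj : j < (l.takeWhile (· < x)).length) : ∃ y, l[j]? = some y ∧ y < x := by
  obtain ⟨t, ht⟩ := takeWhile_prefix (l := l) (· < x)
  refine ⟨(l.takeWhile (· < x))[j], ?_, by simpa using mem_takeWhile_imp (getElem_mem hj)⟩
  conv_lhs => rw [← ht]
  rw [getElem?_append_left hj, getElem?_eq_getElem hj]

theorem List.lt_length_takeWhile_of_getElem? {l : List ℕ} (hl : l.Pairwise (· < ·)) {x j y : ℕ}
    (hy : l[j]? = some y) (hyx : y < x) : j < (l.takeWhile (· < x)).length := by
  induction l generalizing j with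
  | nil => simp at hy
  | cons a l ih =>
    rw [pairwise_cons] at hl
    by_cases ha : a < x
    · cases j with
      | zero => simp [ha]
      | succ j => simpa [ha] using ih hl.2 hy
    · cases j with
      | zero => simp at hy; omega
      | succ j => have := hl.1 y (mem_of_getElem? hy); omega

theorem List.Pairwise.le_of_getElem? {l : List ℕ} (hl : l.Pairwise (· < ·)) {i j u v : ℕ}
    (hij : i ≤ j) (hu : l[i]? = some u) (hv : l[j]? = some v) : u ≤ v := by
  obtain ⟨hi, rfl⟩ := getElem?_eq_some_iff.1 hu
  obtain ⟨hj, rfl⟩ := getElem?_eq_some_iff.1 hv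
  rcases hij.eq_or_lt with rfl | hij
  · rfl
  · exact (pairwise_iff_getElem.1 hl i j hi hj hij).le

theorem List.Pairwise.lt_of_getElem? {l : List ℕ} (hl : l.Pairwise (· < ·)) {i j u v : ℕ}
    (hij : i < j) (hu : l[i]? = some u) (hv : l[j]? = some v) : u < v := by
  obtain ⟨hi, rfl⟩ := getElem?_eq_some_iff.1 hu
  obtain ⟨hj, rfl⟩ := getElem?_eq_some_iff.1 hv
  exact pairwise_iff_getElem.1 hl i j hi hj hij

theorem List.Pairwise.append_cons_of_lt {pre rest : List ℕ} {x b : ℕ}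
    (hp : (pre ++ b :: rest).Pairwise (· < ·)) (hx : ∀ u ∈ pre, u < x) (hxb : x < b) :
    (pre ++ x :: rest).Pairwise (· < ·) := by
  rw [pairwise_append, pairwise_cons] at hp ⊢
  obtain ⟨hpre, ⟨hb, hrest⟩, hcross⟩ := hp
  refine ⟨hpre, ⟨fun v hv => hxb.trans (hb v hv), hrest⟩, fun u hu v hv => ?_⟩
  rcases mem_cons.1 hv with rfl | hv
  · exact hx u hu
  · exact hcross u hu v (mem_cons_of_mem b hv)

namespace Tab

theorem getD_set_ne (T : Tab) {i j : ℕ} (r : List ℕ) (h : i ≠ j) :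
    (T.set i r).getD j [] = T.getD j [] := by
  simp [getD_eq_getElem?_getD, getElem?_set_ne h]

theorem getD_set_self {T : Tab} {i : ℕ} (r : List ℕ) (h : i < T.length) :
    (T.set i r).getD i [] = r := by
  simp [getD_eq_getElem?_getD, getElem?_set_self h]

theorem lt_length_of_getD_ne_nil {T : Tab} {j : ℕ} (h : T.getD j [] ≠ []) : j < T.length := by
  by_contra hc
  exact h (getD_eq_default _ _ (by omega))

theorem getD_mem {T : Tab} {j : ℕ} (h : j < T.length) : T.getD j [] ∈ T := by
  rw [getD_eq_getElem _ _ h]; exact getElem_mem h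

theorem length_getD_succ_lt {T : Tab} (hlen : IsChain (fun r s : List ℕ => s.length < r.length) T)
    {j : ℕ} (h : j + 1 < T.length) : (T.getD (j+1) []).length < (T.getD j []).length := by
  rw [getD_eq_getElem _ _ h, getD_eq_getElem _ _ (by omega)]
  exact isChain_iff_getElem.1 hlen j h

theorem length_getD_add_le {T : Tab} (hlen : IsChain (fun r s : List ℕ => s.length < r.length) T)
    {j : ℕ} (hj : j < T.length) : (T.getD j []).length + j ≤ (T.getD 0 []).length := by
  induction j with
  | zero => simp
  | succ j ih =>
    have := length_getD_succ_lt hlen hj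
    have := ih (by omega)
    omega

theorem isChain_set {T : Tab} (hlen : IsChain (fun r s : List ℕ => s.length < r.length) T)
    {i : ℕ} {r : List ℕ} (h : r.length = (T.getD i []).length) :
    IsChain (fun r s : List ℕ => s.length < r.length) (T.set i r) := by
  have key : (T.set i r).map length = T.map length := by
    refine ext_getElem? fun n => ?_
    by_cases hn : i = n
    · subst hn
      rcases Nat.lt_or_ge i T.length with h' | h'
      · rw [getElem?_map, getElem?_map, getElem?_set_self h', getElem?_eq_getElem h',
          Option.map_some, Option.map_some, h, getD_eq_getElem _ _ h']
      · simp [set_eq_of_length_le h']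
    · simp [getElem?_set_ne hn]
  have hmap : IsChain (fun a b : ℕ => b < a) ((T.set i r).map length) := by
    rw [key]; exact (isChain_map length).2 hlen
  exact (isChain_map length).1 hmap

theorem getElem?_getD_set_set (T : Tab) {k m j n : ℕ} (x : ℕ) (h : j ≠ k ∨ n ≠ m) :
    ((T.set k ((T.getD k []).set m x)).getD j [])[n]? = (T.getD j [])[n]? := by
  by_cases hjk : j = k
  · subst hjk
    rcases Nat.lt_or_ge j T.length with hj | hj
    · rw [getD_set_self _ hj, getElem?_set_ne (by omega)]
    · rw [set_eq_of_length_le hj]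
  · rw [getD_set_ne _ _ (Ne.symm hjk)]

theorem length_getD_set_set (T : Tab) (k m j x : ℕ) :
    ((T.set k ((T.getD k []).set m x)).getD j []).length = (T.getD j []).length := by
  by_cases hjk : j = k
  · subst hjk
    rcases Nat.lt_or_ge j T.length with hj | hj
    · rw [getD_set_self _ hj, length_set]
    · rw [set_eq_of_length_le hj]
  · rw [getD_set_ne _ _ (Ne.symm hjk)]

theorem drop_getD_set_set (T : Tab) {k m j n : ℕ} (x : ℕ) (h : j ≠ k ∨ m < n) :
    ((T.set k ((T.getD k []).set m x)).getD j []).drop n = (T.getD j []).drop n := by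
  refine ext_getElem? fun i => ?_
  simp only [getElem?_drop]
  exact getElem?_getD_set_set T x (by omega)

/-- Rows of a shifted tableau start on the diagonal: row `j` has no entry in a column `c < j`
(where `c - j` would truncate to `0`). -/
def entry (T : Tab) (j c : ℕ) : Option ℕ :=
  if j ≤ c then (T.getD j [])[c - j]? else none

theorem entry_eq_some {T : Tab} {j c y : ℕ} :
    entry T j c = some y ↔ j ≤ c ∧ (T.getD j [])[c - j]? = some y := by
  unfold entry; split_ifs <;> simp_all

theorem entry_isSome_of_le {T : Tab} (hlen : IsChain (fun r s : List ℕ => s.length < r.length) T)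
    (c : ℕ) : ∀ i j, i ≤ j → (entry T j c).isSome → (entry T i c).isSome := by
  intro i j hij
  induction j, hij using Nat.le_induction with
  | base => exact id
  | succ j hij ih =>
    intro h
    apply ih
    unfold entry at h ⊢
    split_ifs at h with hjc
    swap; · simp at h
    have hrow : c - (j + 1) < (T.getD (j+1) []).length := by simpa using h
    have hj : j + 1 < T.length :=
      lt_length_of_getD_ne_nil (ne_nil_of_length_pos (by omega))
    have := length_getD_succ_lt hlen hj
    rw [if_pos (by omega)]
    simp only [isSome_getElem?]
    omega

theorem colList_eq_filterMap_entry (T : Tab) (c : ℕ) :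
    colList T c = (range (c+1)).filterMap (fun i => entry T i c) := by
  refine filterMap_congr fun i hi => ?_
  rw [entry, if_pos (by simp at hi; omega), getD_eq_getElem?_getD]
  cases T[i]? <;> rfl

theorem getElem?_colList {T : Tab} (hlen : IsChain (fun r s : List ℕ => s.length < r.length) T)
    (c j : ℕ) : (colList T c)[j]? = entry T j c := by
  rw [colList_eq_filterMap_entry,
    getElem?_filterMap_range_of_antitone (entry_isSome_of_le hlen c)]
  split_ifs with h
  · rfl
  · simp [entry, show ¬ j ≤ c by omega]

theorem entry_set_set_self {T : Tab} {k c : ℕ} (hk : (entry T k c).isSome) (x : ℕ) :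
    entry (T.set k ((T.getD k []).set (c - k) x)) k c = some x := by
  unfold entry at hk ⊢
  split_ifs at hk ⊢ with hkc
  · simp only [isSome_getElem?] at hk
    have hkT : k < T.length := lt_length_of_getD_ne_nil (ne_nil_of_length_pos (by omega))
    rw [getD_set_self _ hkT, getElem?_set_self hk]
  · simp at hk

theorem entry_set_set_of_ne {T : Tab} {k c c' : ℕ} (hkc : k ≤ c) (x : ℕ) (hc : c' ≠ c) (j : ℕ) :
    entry (T.set k ((T.getD k []).set (c - k) x)) j c' = entry T j c' := by
  unfold entry
  split_ifs with hjc
  · exact getElem?_getD_set_set T x (by omega)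
  · rfl

def appendTop (T : Tab) (s : List ℕ) : Tab := (T.getD 0 [] ++ s) :: T.tail

theorem getD_appendTop (T : Tab) (s : List ℕ) {i : ℕ} (hi : 1 ≤ i) :
    (appendTop T s).getD i [] = T.getD i [] := by
  obtain ⟨i, rfl⟩ := Nat.exists_eq_add_of_le' hi
  cases T <;> simp [appendTop]

theorem appendTop_set (T : Tab) (s : List ℕ) {i : ℕ} (hi : 1 ≤ i) (r : List ℕ) :
    (appendTop T s).set i r = appendTop (T.set i r) s := by
  obtain ⟨i, rfl⟩ := Nat.exists_eq_add_of_le' hi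
  cases T <;> simp [appendTop]

theorem updRow_appendTop {T : Tab} (hT : T ≠ []) (s : List ℕ) {i : ℕ} (hi : 1 ≤ i)
    (r : List ℕ) : updRow (appendTop T s) i r = (T.getD 0 [] ++ s) :: (updRow T i r).tail := by
  obtain ⟨t, ts, rfl⟩ := exists_cons_of_ne_nil hT
  obtain ⟨i, rfl⟩ := Nat.exists_eq_add_of_le' hi
  unfold updRow
  split_ifs <;> simp_all [appendTop]
  omega

theorem colList_appendTop (T : Tab) (s : List ℕ) {c : ℕ} (hc : c < (T.getD 0 []).length) :
    colList (appendTop T s) c = colList T c := by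
  simp only [colList_eq_filterMap_entry]
  refine filterMap_congr fun j _ => ?_
  unfold entry
  split_ifs with hjc
  · rcases Nat.eq_zero_or_pos j with rfl | hj
    · simp only [appendTop, getD_cons_zero, Nat.sub_zero]
      exact getElem?_append_left hc
    · rw [getD_appendTop T s hj]
  · rfl

/-- Row `i + 1` at index `k` and row `i` at index `k + 1` lie in the same column `i + 1 + k`. -/
def ColsIncreasingFrom (T : Tab) (c : ℕ) : Prop :=
  ∀ i k u v, c ≤ i + 1 + k → (T.getD (i+1) [])[k]? = some u →
    (T.getD i [])[k+1]? = some v → v < u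

theorem ColsIncreasingFrom.mono {T : Tab} {c d : ℕ} (h : ColsIncreasingFrom T c) (hcd : c ≤ d) :
    ColsIncreasingFrom T d :=
  fun i k u v hk => h i k u v (by omega)

theorem ColsIncreasingFrom.set_set {T : Tab} {c k m : ℕ} (h : ColsIncreasingFrom T c) (x : ℕ)
    (hkm : k + m < c) : ColsIncreasingFrom (T.set k ((T.getD k []).set m x)) c := by
  intro i n u v hc hu hv
  rw [getElem?_getD_set_set _ _ (by omega)] at hu hv
  exact h i n u v hc hu hv

/-- Every row below the first ends strictly left of column `L`, the last column of the first
row, and every entry of the first row is smaller than the letter `x` being inserted: this is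
what keeps an insertion into the lower rows away from the first row. -/
structure BelowTop (L : ℕ) (T : Tab) (x : ℕ) : Prop where
  length_top : (T.getD 0 []).length = L + 1
  top_lt : ∀ y ∈ T.getD 0 [], y < x
  lengths : IsChain (fun r s : List ℕ => s.length < r.length) T
  lower_rows : ∀ j, 1 ≤ j → j < T.length → (T.getD j []).length + j ≤ L

theorem BelowTop.ne_nil {L : ℕ} {T : Tab} {x : ℕ} (h : BelowTop L T x) : T ≠ [] := by
  rintro rfl
  simpa using h.length_top

theorem BelowTop.mono {L : ℕ} {T : Tab} {x y : ℕ} (h : BelowTop L T x) (hxy : x ≤ y) :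
    BelowTop L T y :=
  { h with top_lt := fun z hz => (h.top_lt z hz).trans_le hxy }

theorem BelowTop.set_set {L : ℕ} {T : Tab} {x y : ℕ} (h : BelowTop L T x) (hxy : x ≤ y)
    {k : ℕ} (hk : 1 ≤ k) (m z : ℕ) : BelowTop L (T.set k ((T.getD k []).set m z)) y where
  length_top := by rw [getD_set_ne _ _ (by omega), h.length_top]
  top_lt w hw := by
    rw [getD_set_ne _ _ (by omega)] at hw
    exact (h.top_lt w hw).trans_le hxy
  lengths := isChain_set h.lengths (by rw [length_set])
  lower_rows j hj hjT := by
    rw [length_getD_set_set]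
    exact h.lower_rows j hj (by simpa using hjT)

theorem BelowTop.entry_zero {L : ℕ} {T : Tab} {x : ℕ} (h : BelowTop L T x) {c : ℕ} (hc : c ≤ L) :
    (entry T 0 c).isSome := by
  have := h.length_top
  simp only [entry, if_pos (Nat.zero_le c), Nat.sub_zero, isSome_getElem?]
  omega

theorem BelowTop.lt_of_entry_zero {L : ℕ} {T : Tab} {x c y : ℕ} (h : BelowTop L T x)
    (hy : entry T 0 c = some y) : y < x :=
  h.top_lt y (mem_of_getElem? (entry_eq_some.1 hy).2)

/-- Row `k` reaches column `c` but its entry in column `c + 1`, if any, is not below `x`; so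
column `c + 1` stops above row `k`, in a row that ends in column `c`: an outer corner. -/
theorem BelowTop.addable_succ {L : ℕ} {T : Tab} {x c k : ℕ} (h : BelowTop L T x) (hc : c + 1 ≤ L)
    (hk : (entry T k c).isSome) (hge : ∀ u, entry T k (c+1) = some u → x ≤ u)
    (hdw : (colList T (c+1)).dropWhile (· < x) = []) :
    1 ≤ (colList T (c+1)).length ∧
      (T.getD (colList T (c+1)).length []).length = c + 1 - (colList T (c+1)).length ∧
      (colList T (c+1)).length ≤ c + 1 := by
  set m := (colList T (c+1)).length
  have hcol := getElem?_colList h.lengths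
  have hlt : ∀ y ∈ colList T (c+1), y < x := by simpa using dropWhile_eq_nil_iff.1 hdw
  have hmk : m ≤ k := by
    by_contra hkm
    obtain ⟨u, hu⟩ : ∃ u, entry T k (c+1) = some u := by
      rw [← hcol]; exact ⟨_, getElem?_eq_getElem (by omega)⟩
    have := hlt u (mem_of_getElem? ((hcol _ _).trans hu))
    have := hge u hu
    omega
  have hm_none : entry T m (c+1) = none := by rw [← hcol]; simp [m]
  have hm_some := entry_isSome_of_le h.lengths c m k hmk hk
  have hm1 : 1 ≤ m := by
    by_contra hm0
    have := h.entry_zero hc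
    rw [show 0 = m by omega, hm_none] at this
    simp at this
  unfold entry at hm_none hm_some
  split_ifs at hm_some with hmc
  · rw [if_pos (by omega), getElem?_eq_none_iff] at hm_none
    simp only [isSome_getElem?] at hm_some
    omega
  · simp at hm_some

/-- The insertion of `x` into row `i` exists, keeps the first row, and is unaffected by
appending any word `s` to the first row. -/
def InsRowBelowTop (T : Tab) (i x : ℕ) : Prop :=
  ∃ (Ts : Tab) (pos : ℕ × ℕ) (pr : Bool), ∀ s : List ℕ,
    InsRow (appendTop T s) i x ((T.getD 0 [] ++ s) :: Ts) pos pr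

def InsColBelowTop (T : Tab) (c x : ℕ) : Prop :=
  ∃ (Ts : Tab) (pos : ℕ × ℕ) (pr : Bool), ∀ s : List ℕ,
    InsCol (appendTop T s) c x ((T.getD 0 [] ++ s) :: Ts) pos pr

section Transfer

variable {T : Tab} {i x b : ℕ} {rest : List ℕ}

theorem InsRowBelowTop.of_dropWhile_eq_nil (hT : T ≠ []) (hi : 1 ≤ i)
    (hdw : (T.getD i []).dropWhile (· < x) = []) : InsRowBelowTop T i x := by
  refine ⟨(updRow T i (T.getD i [] ++ [x])).tail, (i, i + (T.getD i []).length), false,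
    fun s => ?_⟩
  have h := InsRow.append (appendTop T s) i x (T.getD i []) (getD_appendTop T s hi).symm hdw
  rwa [updRow_appendTop hT s hi] at h

theorem InsRowBelowTop.of_equal (hi : 1 ≤ i) (hdw : (T.getD i []).dropWhile (· < x) = x :: rest)
    (h : InsRowBelowTop T (i+1) (x+1)) : InsRowBelowTop T i x := by
  obtain ⟨Ts, pos, pr, h⟩ := h
  exact ⟨Ts, pos, pr, fun s =>
    InsRow.equal _ i x rest _ pos pr (by rwa [getD_appendTop T s hi]) (h s)⟩

theorem InsRowBelowTop.of_parity (hi : 1 ≤ i) (htw : (T.getD i []).takeWhile (· < x) = [])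
    (hdw : (T.getD i []).dropWhile (· < x) = b :: rest) (hxb : x < b) (hpar : x % 2 ≠ b % 2)
    (h : InsColBelowTop T (i+1) (x+2)) : InsRowBelowTop T i x := by
  obtain ⟨Ts, pos, pr, h⟩ := h
  exact ⟨Ts, pos, pr, fun s => InsRow.parity _ i x b rest _ pos pr
    (by rwa [getD_appendTop T s hi]) (by rwa [getD_appendTop T s hi]) hxb hpar (h s)⟩

theorem InsRowBelowTop.of_bumpRow (hi : 1 ≤ i) (hdw : (T.getD i []).dropWhile (· < x) = b :: rest)
    (hxb : x < b) (hpre : (T.getD i []).takeWhile (· < x) ≠ [])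
    (h : InsRowBelowTop (T.set i ((T.getD i []).takeWhile (· < x) ++ x :: rest)) (i+1) b) :
    InsRowBelowTop T i x := by
  obtain ⟨Ts, pos, pr, h⟩ := h
  refine ⟨Ts, pos, pr, fun s => ?_⟩
  have h := h s
  rw [getD_set_ne _ _ (by omega), ← appendTop_set T s hi] at h
  exact InsRow.bumpRow _ i x b _ rest _ pos pr (by rw [getD_appendTop T s hi])
    (by rwa [getD_appendTop T s hi]) hxb hpre h

theorem InsRowBelowTop.of_bumpDiag (hi : 1 ≤ i) (htw : (T.getD i []).takeWhile (· < x) = [])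
    (hdw : (T.getD i []).dropWhile (· < x) = b :: rest) (hxb : x < b) (hpar : x % 2 = b % 2)
    (h : InsColBelowTop (T.set i (x :: rest)) (i+1) b) : InsRowBelowTop T i x := by
  obtain ⟨Ts, pos, pr, h⟩ := h
  refine ⟨Ts, pos, pr, fun s => ?_⟩
  have h := h s
  rw [getD_set_ne _ _ (by omega), ← appendTop_set T s hi] at h
  exact InsRow.bumpDiag _ i x b rest _ pos pr
    (by rwa [getD_appendTop T s hi]) (by rwa [getD_appendTop T s hi]) hxb hpar h

variable {c k : ℕ}

theorem InsColBelowTop.of_dropWhile_eq_nil (hT : T ≠ []) (hc : c < (T.getD 0 []).length)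
    (hdw : (colList T c).dropWhile (· < x) = []) (hk : 1 ≤ (colList T c).length)
    (hrow : (T.getD (colList T c).length []).length = c - (colList T c).length)
    (hkc : (colList T c).length ≤ c) : InsColBelowTop T c x := by
  refine ⟨(updRow T (colList T c).length
    (T.getD (colList T c).length [] ++ [x])).tail, ((colList T c).length, c), true,
    fun s => ?_⟩
  have hcol := colList_appendTop T s hc
  have h := InsCol.append (appendTop T s) c x (colList T c).length (by rwa [hcol])
    (by rw [hcol]) (by rwa [getD_appendTop T s hk]) hkc
  rwa [getD_appendTop T s hk, updRow_appendTop hT s hk] at h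

theorem InsColBelowTop.of_equal (hc : c < (T.getD 0 []).length)
    (hdw : (colList T c).dropWhile (· < x) = x :: rest)
    (h : InsColBelowTop T (c+1) (x+1)) : InsColBelowTop T c x := by
  obtain ⟨Ts, pos, pr, h⟩ := h
  exact ⟨Ts, pos, pr, fun s =>
    InsCol.equal _ c x rest _ pos pr (by rwa [colList_appendTop T s hc]) (h s)⟩

theorem InsColBelowTop.of_bump (hc : c < (T.getD 0 []).length)
    (hdw : (colList T c).dropWhile (· < x) = b :: rest) (hxb : x < b)
    (hk : k = ((colList T c).takeWhile (· < x)).length) (hk1 : 1 ≤ k)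
    (h : InsColBelowTop (T.set k ((T.getD k []).set (c - k) x)) (c+1) b) :
    InsColBelowTop T c x := by
  obtain ⟨Ts, pos, pr, h⟩ := h
  refine ⟨Ts, pos, pr, fun s => ?_⟩
  have h := h s
  rw [getD_set_ne _ _ (by omega), ← appendTop_set T s hk1, ← getD_appendTop T s hk1] at h
  exact InsCol.bump _ c x b k rest _ pos pr (by rwa [colList_appendTop T s hc]) hxb
    (by rwa [colList_appendTop T s hc]) h

end Transfer

/-- Only the columns `≥ c` are constrained, the part the insertion still reads; `addable` says
that once `x` exceeds column `c`, the box below that column is an outer corner. -/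
structure ColInv (L : ℕ) (T : Tab) (c x : ℕ) : Prop extends BelowTop L T x where
  col_le : c ≤ L
  sorted_from : ∀ j, 1 ≤ j → ((T.getD j []).drop (c - j)).Pairwise (· < ·)
  cols : ColsIncreasingFrom T c
  addable : (colList T c).dropWhile (· < x) = [] →
    1 ≤ (colList T c).length ∧
      (T.getD (colList T c).length []).length = c - (colList T c).length ∧
      (colList T c).length ≤ c

namespace ColInv

variable {L : ℕ} {T : Tab} {c x b : ℕ} {rest : List ℕ}

theorem entry_lt_entry_succ (h : ColInv L T c x) {k y u : ℕ} (hk : 1 ≤ k)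
    (hy : entry T k c = some y) (hu : entry T k (c+1) = some u) : y < u := by
  obtain ⟨hkc, hy⟩ := entry_eq_some.1 hy
  obtain ⟨-, hu⟩ := entry_eq_some.1 hu
  apply (h.sorted_from k hk).lt_of_getElem? zero_lt_one
  · rwa [getElem?_drop, Nat.add_zero]
  · rwa [getElem?_drop, show c - k + 1 = c + 1 - k by omega]

theorem entry_eq_of_dropWhile_eq_cons (h : ColInv L T c x)
    (hdw : (colList T c).dropWhile (· < x) = b :: rest) :
    entry T ((colList T c).takeWhile (· < x)).length c = some b := by
  rw [← getElem?_colList h.lengths, getElem?_length_takeWhile hdw]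

theorem one_le_length_takeWhile (h : ColInv L T c x)
    (hdw : (colList T c).dropWhile (· < x) = b :: rest) :
    1 ≤ ((colList T c).takeWhile (· < x)).length := by
  by_contra h0
  have hb := h.entry_eq_of_dropWhile_eq_cons hdw
  rw [show ((colList T c).takeWhile (· < x)).length = 0 by omega] at hb
  have := h.lt_of_entry_zero hb
  have := le_of_dropWhile_lt_eq_cons hdw
  omega

theorem succ_le_of_dropWhile_eq_cons (h : ColInv L T c x)
    (hdw : (colList T c).dropWhile (· < x) = b :: rest) : c + 1 ≤ L := by
  have hk1 := h.one_le_length_takeWhile hdw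
  obtain ⟨hkc, hb⟩ := entry_eq_some.1 (h.entry_eq_of_dropWhile_eq_cons hdw)
  set k := ((colList T c).takeWhile (· < x)).length
  have hlen : c - k < (T.getD k []).length := (List.getElem?_eq_some_iff.1 hb).1
  have := h.lower_rows k hk1 (lt_length_of_getD_ne_nil (ne_nil_of_length_pos (by omega)))
  omega

theorem next_of_equal (h : ColInv L T c x) (hdw : (colList T c).dropWhile (· < x) = x :: rest) :
    ColInv L T (c+1) (x+1) where
  toBelowTop := h.mono (Nat.le_succ x)
  col_le := h.succ_le_of_dropWhile_eq_cons hdw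
  sorted_from j hj := (h.sorted_from j hj).sublist (drop_sublist_drop_left _ (by omega))
  cols := h.cols.mono (Nat.le_succ c)
  addable := (h.mono (Nat.le_succ x)).addable_succ (h.succ_le_of_dropWhile_eq_cons hdw)
    (by rw [h.entry_eq_of_dropWhile_eq_cons hdw]; rfl)
    fun _ hu => h.entry_lt_entry_succ (h.one_le_length_takeWhile hdw)
      (h.entry_eq_of_dropWhile_eq_cons hdw) hu

theorem next_of_bump (h : ColInv L T c x) (hdw : (colList T c).dropWhile (· < x) = b :: rest)
    (hxb : x < b) :
    ColInv L (T.set ((colList T c).takeWhile (· < x)).length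
      ((T.getD ((colList T c).takeWhile (· < x)).length []).set
        (c - ((colList T c).takeWhile (· < x)).length) x)) (c+1) b := by
  have hk1 := h.one_le_length_takeWhile hdw
  have hb := h.entry_eq_of_dropWhile_eq_cons hdw
  have hkc := (entry_eq_some.1 hb).1
  set k := ((colList T c).takeWhile (· < x)).length
  have hB := h.toBelowTop.set_set hxb.le hk1 (c - k) x
  exact {
    toBelowTop := hB
    col_le := h.succ_le_of_dropWhile_eq_cons hdw
    sorted_from := fun j hj => by
      rw [drop_getD_set_set _ _ (by omega)]
      exact (h.sorted_from j hj).sublist (drop_sublist_drop_left _ (by omega))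
    cols := (h.cols.mono (Nat.le_succ c)).set_set x (by omega)
    addable := hB.addable_succ (h.succ_le_of_dropWhile_eq_cons hdw)
      (by rw [entry_set_set_self (by rw [hb]; rfl)]; rfl)
      fun u hu => (h.entry_lt_entry_succ hk1 hb
        (by rwa [entry_set_set_of_ne hkc x (by omega)] at hu)).le }

end ColInv

theorem ColInv.insColBelowTop {L : ℕ} {T : Tab} {c x : ℕ} (h : ColInv L T c x) :
    InsColBelowTop T c x := by
  cases hdw : (colList T c).dropWhile (· < x) with
  | nil =>
    obtain ⟨hk1, hrow, hkc⟩ := h.addable hdw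
    exact .of_dropWhile_eq_nil h.ne_nil (by rw [h.length_top]; exact Nat.lt_succ_of_le h.col_le)
      hdw hk1 hrow hkc
  | cons b rest =>
    have hc := h.succ_le_of_dropWhile_eq_cons hdw
    have hc' : c < (T.getD 0 []).length := by rw [h.length_top]; omega
    rcases (le_of_dropWhile_lt_eq_cons hdw).eq_or_lt with rfl | hxb
    · exact .of_equal hc' hdw (h.next_of_equal hdw).insColBelowTop
    · exact .of_bump hc' hdw hxb rfl (h.one_le_length_takeWhile hdw)
        (h.next_of_bump hdw hxb).insColBelowTop
termination_by L - c

/-- `above`: the entry of row `i - 1` directly above the box where `x` lands in row `i` is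
smaller than `x`. -/
structure RowInv (L : ℕ) (T : Tab) (i x : ℕ) : Prop extends BelowTop L T x where
  sorted : ∀ j, 1 ≤ j → (T.getD j []).Pairwise (· < ·)
  cols : ColsIncreasingFrom T i
  above : (T.getD i []).takeWhile (· < x) ≠ [] → ∀ z,
    (T.getD (i-1) [])[((T.getD i []).takeWhile (· < x)).length + 1]? = some z → z < x

namespace RowInv

variable {L : ℕ} {T : Tab} {i x b : ℕ} {rest : List ℕ}

theorem lt_length (hdw : (T.getD i []).dropWhile (· < x) = b :: rest) : i < T.length :=
  lt_length_of_getD_ne_nil fun h => by rw [h] at hdw; simp at hdw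

theorem succ_le (h : RowInv L T i x) (hi : 1 ≤ i)
    (hdw : (T.getD i []).dropWhile (· < x) = b :: rest) : i + 1 ≤ L := by
  have := h.lower_rows i hi (lt_length hdw)
  have : (T.getD i []) ≠ [] := fun h => by rw [h] at hdw; simp at hdw
  have := length_pos_of_ne_nil this
  omega

theorem next_of_equal (h : RowInv L T i x) (hi : 1 ≤ i)
    (hdw : (T.getD i []).dropWhile (· < x) = x :: rest) : RowInv L T (i+1) (x+1) where
  toBelowTop := h.mono (Nat.le_succ x)
  sorted := h.sorted
  cols := h.cols.mono (Nat.le_succ i)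
  above hne z hz := by
    set k' := ((T.getD (i+1) []).takeWhile (· < x + 1)).length
    have hk' : 1 ≤ k' := length_pos_of_ne_nil hne
    change (T.getD i [])[k' + 1]? = some z at hz
    obtain ⟨u, hu, hux⟩ := exists_getElem?_lt_of_lt_length_takeWhile (show k' - 1 < k' by omega)
    obtain ⟨w, hw⟩ : ∃ w, (T.getD i [])[k']? = some w :=
      ⟨_, getElem?_eq_getElem (List.getElem?_eq_some_iff.1 hz).1.le⟩
    have hwu : w < u := h.cols i (k' - 1) u w (by omega) hu (by rwa [Nat.sub_add_cancel hk'])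
    have hk'k := lt_length_takeWhile_of_getElem? (h.sorted i hi) hw (by omega : w < x)
    have := (h.sorted i hi).le_of_getElem? hk'k hz (getElem?_length_takeWhile hdw)
    omega

theorem set_takeWhile_eq (hdw : (T.getD i []).dropWhile (· < x) = b :: rest) :
    T.set i ((T.getD i []).takeWhile (· < x) ++ x :: rest) =
      T.set i ((T.getD i []).set ((T.getD i []).takeWhile (· < x)).length x) := by
  have hs := eq_takeWhile_append_of_dropWhile_eq_cons hdw
  set pre := (T.getD i []).takeWhile (· < x)
  rw [hs, set_append_right _ _ le_rfl, Nat.sub_self]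
  rfl

theorem cols_bumpRow (h : RowInv L T i x)
    (hdw : (T.getD i []).dropWhile (· < x) = b :: rest) (hxb : x < b)
    (hpre : (T.getD i []).takeWhile (· < x) ≠ []) :
    ColsIncreasingFrom (T.set i ((T.getD i []).set ((T.getD i []).takeWhile (· < x)).length x))
      (i+1) := by
  set k := ((T.getD i []).takeWhile (· < x)).length
  have hiT := lt_length hdw
  have hb : (T.getD i [])[k]? = some b := getElem?_length_takeWhile hdw
  have hkx : ((T.set i ((T.getD i []).set k x)).getD i [])[k]? = some x := by
    rw [getD_set_self _ hiT, getElem?_set_self (List.getElem?_eq_some_iff.1 hb).1]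
  intro i' n u v hc hu hv
  by_cases hlow : i' + 1 = i ∧ n = k
  · obtain ⟨rfl, rfl⟩ := hlow
    rw [hkx] at hu
    rw [getElem?_getD_set_set _ _ (by omega)] at hv
    exact (Option.some.inj hu) ▸ h.above hpre v hv
  by_cases hup : i' = i ∧ n + 1 = k
  · obtain ⟨rfl, hn⟩ := hup
    rw [hn, hkx] at hv
    rw [getElem?_getD_set_set _ _ (by omega)] at hu
    have := h.cols i' n u b (by omega) hu (by rwa [hn])
    have := Option.some.inj hv
    omega
  rw [getElem?_getD_set_set _ _ (by omega)] at hu hv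
  exact h.cols i' n u v (by omega) hu hv

theorem above_bumpRow (h : RowInv L T i x)
    (hdw : (T.getD i []).dropWhile (· < x) = b :: rest) (hxb : x < b)
    (hpre : (T.getD i []).takeWhile (· < x) ≠ [])
    (hsorted : ((T.getD i []).takeWhile (· < x) ++ x :: rest).Pairwise (· < ·)) :
    ((T.getD (i+1) []).takeWhile (· < b) ≠ [] → ∀ z,
      ((T.getD i []).takeWhile (· < x) ++ x :: rest)[
        ((T.getD (i+1) []).takeWhile (· < b)).length + 1]? = some z → z < b) := by
  intro hne z hz
  set k := ((T.getD i []).takeWhile (· < x)).length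
  set k' := ((T.getD (i+1) []).takeWhile (· < b)).length
  have hk' : 1 ≤ k' := length_pos_of_ne_nil hne
  have hk : 1 ≤ k := length_pos_of_ne_nil hpre
  have hk'k : k' < k := by
    by_contra hkk
    obtain ⟨u, hu, hub⟩ := exists_getElem?_lt_of_lt_length_takeWhile (show k - 1 < k' by omega)
    have := h.cols i (k - 1) u b (by omega) hu
      (by rw [Nat.sub_add_cancel (by omega)]; exact getElem?_length_takeWhile hdw)
    omega
  have := hsorted.le_of_getElem? (show k' + 1 ≤ k by omega) hz
    (by rw [getElem?_append_right le_rfl, Nat.sub_self]; rfl)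
  omega

theorem next_of_bumpRow (h : RowInv L T i x) (hi : 1 ≤ i)
    (hdw : (T.getD i []).dropWhile (· < x) = b :: rest) (hxb : x < b)
    (hpre : (T.getD i []).takeWhile (· < x) ≠ []) :
    RowInv L (T.set i ((T.getD i []).takeWhile (· < x) ++ x :: rest)) (i+1) b := by
  have hiT := lt_length hdw
  have hsorted : ((T.getD i []).takeWhile (· < x) ++ x :: rest).Pairwise (· < ·) := by
    refine Pairwise.append_cons_of_lt ?_ (fun u hu => by simpa using mem_takeWhile_imp hu) hxb
    rw [← eq_takeWhile_append_of_dropWhile_eq_cons hdw]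
    exact h.sorted i hi
  refine
    { toBelowTop := by rw [set_takeWhile_eq hdw]; exact h.set_set hxb.le hi _ x
      sorted := fun j hj => ?_
      cols := by rw [set_takeWhile_eq hdw]; exact h.cols_bumpRow hdw hxb hpre
      above := ?_ }
  · rcases eq_or_ne j i with rfl | hji
    · rwa [getD_set_self _ hiT]
    · rw [getD_set_ne _ _ (Ne.symm hji)]
      exact h.sorted j hj
  · simp only [Nat.add_sub_cancel, getD_set_self _ hiT, getD_set_ne _ _ (show i ≠ i + 1 by omega)]
    exact h.above_bumpRow hdw hxb hpre hsorted

theorem getD_eq_cons_of_takeWhile_eq_nil (htw : (T.getD i []).takeWhile (· < x) = [])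
    (hdw : (T.getD i []).dropWhile (· < x) = b :: rest) : T.getD i [] = b :: rest := by
  rw [eq_takeWhile_append_of_dropWhile_eq_cons hdw, htw, nil_append]

theorem lt_of_entry_succ_diag (h : RowInv L T i x) (hi : 1 ≤ i) (hr : T.getD i [] = b :: rest)
    {u : ℕ} (hu : entry T i (i+1) = some u) : b < u := by
  obtain ⟨-, hu⟩ := entry_eq_some.1 hu
  rw [show i + 1 - i = 1 by omega] at hu
  exact (h.sorted i hi).lt_of_getElem? zero_lt_one (by rw [hr]; rfl) hu

theorem colInv_of_parity (h : RowInv L T i x) (hi : 1 ≤ i)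
    (htw : (T.getD i []).takeWhile (· < x) = [])
    (hdw : (T.getD i []).dropWhile (· < x) = b :: rest) (hxb : x < b) :
    ColInv L T (i+1) (x+2) where
  toBelowTop := h.mono (by omega)
  col_le := h.succ_le hi hdw
  sorted_from j hj := (h.sorted j hj).drop
  cols := h.cols.mono (Nat.le_succ i)
  addable := (h.mono (by omega)).addable_succ (h.succ_le hi hdw) (k := i)
    (by rw [entry, if_pos le_rfl, Nat.sub_self, getD_eq_cons_of_takeWhile_eq_nil htw hdw]; rfl)
    fun _ hu => by
      have := h.lt_of_entry_succ_diag hi (getD_eq_cons_of_takeWhile_eq_nil htw hdw) hu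
      omega

theorem colInv_of_bumpDiag (h : RowInv L T i x) (hi : 1 ≤ i)
    (htw : (T.getD i []).takeWhile (· < x) = [])
    (hdw : (T.getD i []).dropWhile (· < x) = b :: rest) (hxb : x < b) :
    ColInv L (T.set i (x :: rest)) (i+1) b := by
  have hr := getD_eq_cons_of_takeWhile_eq_nil htw hdw
  have hset : T.set i (x :: rest) = T.set i ((T.getD i []).set (i - i) x) := by
    rw [Nat.sub_self, hr]; rfl
  have hB := h.set_set hxb.le hi (i - i) x
  rw [hset]
  exact {
    toBelowTop := hB
    col_le := h.succ_le hi hdw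
    sorted_from := fun j hj => by
      rw [drop_getD_set_set _ _ (by omega)]
      exact (h.sorted j hj).drop
    cols := (h.cols.mono (Nat.le_succ i)).set_set x (by omega)
    addable := hB.addable_succ (h.succ_le hi hdw) (k := i)
      (by rw [entry_set_set_self (by rw [entry, if_pos le_rfl, Nat.sub_self, hr]; rfl)]; rfl)
      fun u hu => (h.lt_of_entry_succ_diag hi hr
        (by rwa [entry_set_set_of_ne le_rfl x (by omega)] at hu)).le }

end RowInv

theorem RowInv.insRowBelowTop {L : ℕ} {T : Tab} {i x : ℕ} (h : RowInv L T i x) (hi : 1 ≤ i) :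
    InsRowBelowTop T i x := by
  cases hdw : (T.getD i []).dropWhile (· < x) with
  | nil => exact .of_dropWhile_eq_nil h.ne_nil hi hdw
  | cons b rest =>
    have hiT := RowInv.lt_length hdw
    rcases (le_of_dropWhile_lt_eq_cons hdw).eq_or_lt with rfl | hxb
    · exact .of_equal hi hdw ((h.next_of_equal hi hdw).insRowBelowTop (by omega))
    by_cases hpre : (T.getD i []).takeWhile (· < x) = []
    · by_cases hpar : x % 2 = b % 2
      · exact .of_bumpDiag hi hpre hdw hxb hpar
          (h.colInv_of_bumpDiag hi hpre hdw hxb).insColBelowTop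
      · exact .of_parity hi hpre hdw hxb hpar (h.colInv_of_parity hi hpre hdw hxb).insColBelowTop
    · exact .of_bumpRow hi hdw hxb hpre
        ((h.next_of_bumpRow hi hdw hxb hpre).insRowBelowTop (by omega))
termination_by T.length - i
decreasing_by all_goals (try rw [length_set]); omega

theorem rowInv_of_isIncreasingTab {R : List ℕ} {Ts : Tab} (hT : IsIncreasingTab (R :: Ts)) {a b : ℕ}
    (hR : ∀ y ∈ R, y < a) (hab : a < b) : RowInv R.length ((R ++ [a]) :: Ts) 1 b := by
  obtain ⟨-, hlen, hrows, -, hcols⟩ := hT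
  have hlen : IsChain (fun r s : List ℕ => s.length < r.length) (R :: Ts) := hlen
  have hlower : ∀ j, j < Ts.length → (Ts.getD j []).length + (j + 1) ≤ R.length := by
    intro j hj
    simpa using length_getD_add_le hlen (j := j + 1) (by simpa using hj)
  have htop : ∀ y ∈ R ++ [a], y < b := by
    intro y hy
    rcases mem_append.1 hy with hy | hy
    · exact (hR y hy).trans hab
    · simp at hy; omega
  refine
    { length_top := by simp
      top_lt := htop
      lengths := ?_
      lower_rows := fun j hj hjT => ?_
      sorted := fun j hj => ?_
      cols := fun i k u v _ hu hv => ?_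
      above := fun _ z hz => htop z (mem_of_getElem? hz) }
  · cases Ts with
    | nil => exact isChain_singleton _
    | cons t ts =>
      rw [isChain_cons_cons] at hlen ⊢
      exact ⟨by simp; omega, hlen.2⟩
  · obtain ⟨j, rfl⟩ := Nat.exists_eq_add_of_le' hj
    simpa using hlower j (by simpa using hjT)
  · obtain ⟨j, rfl⟩ := Nat.exists_eq_add_of_le' hj
    rcases Nat.lt_or_ge (j + 1) (R :: Ts).length with hjT | hjT
    · exact isChain_iff_pairwise.1 (hrows _ (getD_mem hjT))
    · rw [getD_eq_default _ _ (by simpa using hjT)]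
      exact .nil
  · cases i with
    | zero =>
      have hk : k < (Ts.getD 0 []).length := (List.getElem?_eq_some_iff.1 hu).1
      have := hlower 0 (lt_length_of_getD_ne_nil (ne_nil_of_length_pos (by omega)))
      have hv' : R[k+1]? = some v := by
        simpa [getElem?_append_left (show k + 1 < R.length by omega)] using hv
      exact hcols 0 k u v (by simpa using hu) hv'
    | succ i => exact hcols (i+1) k u v hu hv

theorem insRow_zero_append {R : List ℕ} (Ts : Tab) {x : ℕ} (hR : ∀ y ∈ R, y < x) :
    InsRow (R :: Ts) 0 x ((R ++ [x]) :: Ts) (0, 0 + R.length) false := by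
  have h := InsRow.append (R :: Ts) 0 x R rfl (dropWhile_eq_nil_iff.2 (by simpa using hR))
  rwa [updRow, if_pos (by simp)] at h

theorem insRow_zero_bumpRow {R rest : List ℕ} {Ts T' : Tab} {a b : ℕ} {pos : ℕ × ℕ} {pr : Bool}
    (hR0 : R ≠ []) (hR : ∀ y ∈ R, y < a) (hab : a < b)
    (h : InsRow ((R ++ a :: rest) :: Ts) 1 b T' pos pr) :
    InsRow ((R ++ b :: rest) :: Ts) 0 a T' pos pr := by
  have hRa : ∀ y ∈ R, decide (y < a) = true := by simpa using hR
  have hba : ¬ decide (b < a) = true := by simpa using hab.le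
  exact InsRow.bumpRow _ 0 a b R rest T' pos pr (by simp [takeWhile_append_of_pos hRa, hba])
    (by simp [dropWhile_append_of_pos hRa, hba]) hab hR0 h

end Tab

theorem InsWord.of_insRow₃ {T T₁ T₂ T₃ : Tab} {x y z : ℕ} {p₁ p₂ p₃ : ℕ × ℕ} {r₁ r₂ r₃ : Bool}
    (h₁ : InsRow T 0 x T₁ p₁ r₁) (h₂ : InsRow T₁ 0 y T₂ p₂ r₂) (h₃ : InsRow T₂ 0 z T₃ p₃ r₃) :
    InsWord T [x, y, z] T₃ :=
  .cons _ _ _ x _ _ _ h₁ (.cons _ _ _ y _ _ _ h₂ (.cons _ _ _ z _ _ _ h₃ (.nil _)))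

/-- If every entry of the first row of the increasing shifted tableau `T` is smaller
than `a`, and `a < b < c` with `row(T)·bac` an FPF-involution word, then `T ← bac` and
`T ← bca` agree; both append `a` and `c` to the end of the first row (the letter `b`
being inserted into the second row). -/
theorem first_row_small_bac_eq_bca (T : Tab) (a b c : ℕ)
    (hne : T ≠ []) (hT : IsIncreasingTab T)
    (hsmall : ∀ y ∈ T.getD 0 [], y < a) (hab : a < b) (hbc : b < c)
    (h : IsFPFWord (rowWord T ++ [b, a, c])) :
    ∃ U : Tab, InsWord T [b, a, c] U ∧ InsWord T [b, c, a] U ∧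
      U.getD 0 [] = T.getD 0 [] ++ [a, c] := by
  obtain ⟨R, Ts, rfl⟩ := exists_cons_of_ne_nil hne
  have hR : ∀ d, a ≤ d → ∀ y ∈ R, y < d := fun d hd y hy => (hsmall y hy).trans_le hd
  have hRd : ∀ d, a ≤ d → d < c → ∀ y ∈ R ++ [d], y < c := by
    simp only [mem_append, mem_singleton]
    rintro d hd hdc y (hy | rfl)
    exacts [hR c (by omega) y hy, hdc]
  obtain ⟨Ts', pos, pr, hins⟩ :=
    (Tab.rowInv_of_isIncreasingTab hT hsmall hab).insRowBelowTop le_rfl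
  have hbump (s : List ℕ) : InsRow ((R ++ b :: s) :: Ts) 0 a ((R ++ a :: s) :: Ts') pos pr :=
    Tab.insRow_zero_bumpRow (hT.1 R mem_cons_self) hsmall hab
      (by simpa [Tab.appendTop] using hins s)
  have hb := Tab.insRow_zero_append Ts (hR b hab.le)
  have hca := Tab.insRow_zero_append Ts' (hRd a le_rfl (by omega))
  have hcb := Tab.insRow_zero_append Ts (hRd b hab.le hbc)
  rw [append_assoc] at hca hcb
  exact ⟨(R ++ [a, c]) :: Ts', .of_insRow₃ hb (hbump []) hca, .of_insRow₃ hb hcb (hbump [c]), rfl⟩
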